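/- arXiv:1403.0250 — 6 statements merged into one kernel-verified Lean document; each statement's English description precedes it below -/
import Mathlib

section
/- Let p ≥ 1 and β ≥ 2 be integers, set r_i = β^i for 0 ≤ i ≤ p+1, and let α = β^{p+1}. Then the edge-coloring c_p of the complete graph on the vertex set {0,1}^α (which has n = 2^{β^{p+1}} vertices) takes at most 2^{4(p+1)·β^p·log₂ β} distinct values on unordered pairs of distinct vertices; equivalently, c_p uses at most 2^{4·(log₂ n)^{1 − 1/(p+1)}·log₂ log₂ n} colors. -/
/-!
Coloring machinery of Conlon–Fox–Lee–Sudakov. Vectors in `{0,1}^α` are modelled as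
`Bool` lists of length `α`. Fix block lengths `r 0 = 1, r 1, …` with `r d ∣ r (d+1)`.
-/

/-- The blocks of resolution with block length `r`: split a vector into consecutive
blocks of length `r` (the last block may be shorter). -/
def blocksOf (r : ℕ) (v : List Bool) : List (List Bool) := v.toChunks r

/-- The function `η_d` (with `r = r_d`): records the position `i` of the first pair of
differing blocks of resolution `d` together with the unordered pair `{v_i, w_i}` of
these blocks; it takes the value `none` (playing the role of `0`) when `v = w`. -/
def eta (r : ℕ) (v w : List Bool) : Option (ℕ × Sym2 (List Bool)) :=
  (((blocksOf r v).zip (blocksOf r w)).zipIdx.map Prod.swap |>.find? (fun q => q.2.1 != q.2.2)).map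
    (fun q => (q.1, s(q.2.1, q.2.2)))

/-- The function `ξ_d`: apply `η_d` to each corresponding pair of blocks of
resolution `d+1`. -/
def xi (r : ℕ → ℕ) (d : ℕ) (v w : List Bool) : List (Option (ℕ × Sym2 (List Bool))) :=
  ((blocksOf (r (d+1)) v).zip (blocksOf (r (d+1)) w)).map fun q => eta (r d) q.1 q.2

/-- The type of colors used by the coloring `c_p`. -/
abbrev EGColor := List (List (Option (ℕ × Sym2 (List Bool))))

instance : DecidableEq (List (Option (ℕ × Sym2 (List Bool)))) := instDecidableEqList
instance : DecidableEq EGColor := instDecidableEqList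

/-- The coloring `c_p (v,w) = (ξ_p(v,w), ξ_{p-1}(v,w), …, ξ_0(v,w))`. -/
def cColor (r : ℕ → ℕ) (p : ℕ) (v w : List Bool) : EGColor :=
  (List.range (p+1)).map fun j => xi r (p - j) v w

/-- The set of colors appearing under `c_p` on (unordered) pairs of distinct
elements of `S`. -/
def colorsOn (r : ℕ → ℕ) (p : ℕ) (S : Finset (List Bool)) : Finset EGColor :=
  ((S ×ˢ S).filter fun q => q.1 ≠ q.2).image fun q => cColor r p q.1 q.2

/-- The vertex set `{0,1}^α`, realized as the set of all `Bool` lists of length `α`. -/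
def allVecs (α : ℕ) : Finset (List Bool) :=
  Finset.univ.image fun v : Fin α → Bool => List.ofFn v

/-- `alphaD rd α`: the largest multiple of `rd` that is strictly less than `α`
(for `α, rd ≥ 1`). -/
def alphaD (rd α : ℕ) : ℕ := rd * ((α - 1) / rd)

/-- The set `C_E^{(d)}` of emerging colors of `S` at resolution `d`: the unordered pairs
`{v'', w''}` of final segments of elements `v = (v', v'')`, `w = (w', w'')` of `S`
(split at `α_d`) with `v' = w'` and `v'' ≠ w''`. -/
def CEset (r : ℕ → ℕ) (α : ℕ) (S : Finset (List Bool)) (d : ℕ) : Finset (Sym2 (List Bool)) :=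
  ((S ×ˢ S).filter fun q =>
      q.1.take (alphaD (r d) α) = q.2.take (alphaD (r d) α) ∧
      q.1.drop (alphaD (r d) α) ≠ q.2.drop (alphaD (r d) α)).image
    fun q => s(q.1.drop (alphaD (r d) α), q.2.drop (alphaD (r d) α))

/-- The set `C_I^{(d)}` of inherited colors of `S` at resolution `d`: the pairs
`(c_p(v', w'), η_{d-1}(v'', w''))` over elements `v = (v', v'')`, `w = (w', w'')` of `S`
(split at `α_d`) with `v' ≠ w'`. -/
def CIset (r : ℕ → ℕ) (p α : ℕ) (S : Finset (List Bool)) (d : ℕ) :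
    Finset (EGColor × Option (ℕ × Sym2 (List Bool))) :=
  ((S ×ˢ S).filter fun q =>
      q.1.take (alphaD (r d) α) ≠ q.2.take (alphaD (r d) α)).image
    fun q => (cColor r p (q.1.take (alphaD (r d) α)) (q.2.take (alphaD (r d) α)),
              eta (r (d-1)) (q.1.drop (alphaD (r d) α)) (q.2.drop (alphaD (r d) α)))

/-!
A color `c_p(v, w)` is a list whose `j`-th entry `ξ_{p-j}(v, w)` is a list of `β^j` values of `η`
on blocks of length `β^{p-j+1}`. Each such value is `0` or a position below `β` together with a
pair of words of length `β^{p-j}`, so it takes at most `β^{2β^{p-j}+2}` values. Multiplying over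
all entries bounds the number of colors by `β^{Σ_j (2β^p + 2β^j)} ≤ β^{4(p+1)β^p}`, using
`Σ_{j≤p} β^j ≤ 2β^p` and `p ≥ 1`; the logarithmic forms are rewritings of this bound.
-/

namespace List

variable {α : Type*}

theorem length_sections (L : List (List α)) : L.sections.length = (L.map length).prod := by
  induction L with
  | nil => rfl
  | cons l L ih => simp [sections, ih, mul_comm]

theorem forall₂_replicate_right {β : Type*} {R : α → β → Prop} {l : List α} {b : β}
    (h : ∀ a ∈ l, R a b) : Forall₂ R l (replicate l.length b) := by
  rw [← map_const', forall₂_map_right_iff, forall₂_same]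
  exact h

-- The loop invariant of Batteries' array-based implementation of `toChunks`.
private theorem toChunks_go_eq (n : ℕ) : ∀ (xs : List α) (acc₁ : Array α) (acc₂ : Array (List α)),
    0 < acc₁.size → acc₁.size ≤ n + 1 →
    toChunks.go (n + 1) xs acc₁ acc₂ =
      acc₂.toList ++ (acc₁.toList ++ xs).take (n + 1) ::
        toChunks (n + 1) ((acc₁.toList ++ xs).drop (n + 1))
  | [], acc₁, acc₂, _, hsize => by
    have hl : acc₁.toList.length ≤ n + 1 := by simpa using hsize
    rw [toChunks.go]
    simp [take_of_length_le hl, drop_of_length_le hl, toChunks]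
  | x :: xs, acc₁, acc₂, _, hsize => by
    rw [toChunks.go]
    split
    · next hfull =>
      have hlen : acc₁.toList.length = n + 1 := by simpa using hfull
      rw [toChunks_go_eq n xs _ _ (by simp) (by simp), take_left' hlen, drop_left' hlen,
        toChunks.eq_3 (n + 1) x xs (by omega), toChunks_go_eq n xs _ _ (by simp) (by simp)]
      simp
    · next hfull =>
      have : acc₁.size ≠ n + 1 := by simpa using hfull
      rw [toChunks_go_eq n xs _ _ (by simp) (by simp; omega)]
      simp

theorem toChunks_eq_take_cons_toChunks_drop {r : ℕ} (hr : 0 < r) {l : List α} (hl : l ≠ []) :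
    l.toChunks r = l.take r :: (l.drop r).toChunks r := by
  obtain ⟨n, rfl⟩ : ∃ n, r = n + 1 := ⟨r - 1, by omega⟩
  obtain ⟨x, xs, rfl⟩ := exists_cons_of_ne_nil hl
  rw [toChunks.eq_3 (n + 1) x xs (by omega), toChunks_go_eq n xs _ _ (by simp) (by simp)]
  simp

theorem toChunks_of_length_eq_mul {r : ℕ} (hr : 0 < r) :
    ∀ {k : ℕ} {l : List α}, l.length = k * r →
      (l.toChunks r).length = k ∧ ∀ c ∈ l.toChunks r, c.length = r
  | 0, l, h => by simp [length_eq_zero_iff.1 (by simpa using h), toChunks]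
  | k + 1, l, h => by
    have hl : l ≠ [] := ne_nil_of_length_pos (by rw [h]; positivity)
    obtain ⟨hlength, hchunks⟩ := toChunks_of_length_eq_mul hr (l := l.drop r) (k := k)
      (by simp [h, Nat.succ_mul])
    rw [toChunks_eq_take_cons_toChunks_drop hr hl]
    refine ⟨by simp [hlength], ?_⟩
    simp only [mem_cons, forall_eq_or_imp, length_take]
    exact ⟨by rw [h, Nat.succ_mul]; omega, hchunks⟩

end List

section ListPi

variable {γ : Type*} [DecidableEq γ]

noncomputable def listPi (L : List (Finset γ)) : Finset (List γ) :=
  (L.map Finset.toList).sections.toFinset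

theorem mem_listPi {L : List (Finset γ)} {f : List γ} :
    f ∈ listPi L ↔ List.Forall₂ (· ∈ ·) f L := by
  simp [listPi, List.mem_sections, List.forall₂_map_right_iff]

theorem card_listPi_le (L : List (Finset γ)) : (listPi L).card ≤ (L.map Finset.card).prod :=
  (List.toFinset_card_le _).trans_eq (by simp [List.length_sections, Function.comp_def])

end ListPi

open Finset

theorem mem_allVecs {n : ℕ} {v : List Bool} : v ∈ allVecs n ↔ v.length = n := by
  refine ⟨fun hv => ?_, fun hv => ?_⟩
  · obtain ⟨f, -, rfl⟩ := mem_image.1 hv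
    exact List.length_ofFn
  · refine mem_image.2 ⟨fun i => v[i.cast hv.symm], mem_univ _, List.ext_get (by simp [hv]) ?_⟩
    simp

theorem card_allVecs (n : ℕ) : (allVecs n).card = 2 ^ n := by
  rw [allVecs, card_image_of_injective _ List.ofFn_injective, card_univ, Fintype.card_fun,
    Fintype.card_bool, Fintype.card_fin]

def etaValues (β r : ℕ) : Finset (Option (ℕ × Sym2 (List Bool))) :=
  insertNone (range β ×ˢ (allVecs r ×ˢ allVecs r).image fun q => s(q.1, q.2))

theorem card_etaValues_le {β : ℕ} (hβ : 2 ≤ β) (r : ℕ) :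
    (etaValues β r).card ≤ β ^ (2 * r + 2) := by
  have hpairs : ((allVecs r ×ˢ allVecs r).image fun q => s(q.1, q.2)).card ≤ 4 ^ r := by
    refine card_image_le.trans_eq ?_
    rw [card_product, card_allVecs, ← mul_pow]
    norm_num
  have hfour : 4 ^ r ≤ β ^ (2 * r) := by
    rw [pow_mul]
    exact Nat.pow_le_pow_left (by nlinarith) r
  have hβr : 1 ≤ β ^ (2 * r) := Nat.one_le_pow _ _ (by omega)
  calc (etaValues β r).card ≤ β * β ^ (2 * r) + 1 := by
        rw [etaValues, card_insertNone, card_product, card_range]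
        gcongr
        exact hpairs.trans hfour
    _ ≤ β ^ (2 * r + 2) := by
        rw [pow_add, sq]
        nlinarith [Nat.mul_le_mul_right (β ^ (2 * r)) hβ]

theorem eta_mem_etaValues {β r : ℕ} (hr : 0 < r) {a b : List Bool}
    (ha : a.length = β * r) (hb : b.length = β * r) : eta r a b ∈ etaValues β r := by
  set L := (blocksOf r a).zip (blocksOf r b)
  obtain ⟨hLa, hblocks_a⟩ := List.toChunks_of_length_eq_mul hr ha
  obtain ⟨hLb, hblocks_b⟩ := List.toChunks_of_length_eq_mul hr hb
  unfold eta
  cases hfind : (L.zipIdx.map Prod.swap).find? (fun q => q.2.1 != q.2.2) with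
  | none => exact none_mem_insertNone
  | some q =>
    obtain ⟨i, c₁, c₂⟩ := q
    obtain ⟨⟨_, j⟩, hmem, hswap⟩ := List.mem_map.1 (List.mem_of_find?_eq_some hfind)
    obtain ⟨rfl, rfl⟩ := Prod.mk.inj hswap
    obtain ⟨hi, hget⟩ := List.mem_zipIdx' hmem
    have hc : c₁ ∈ blocksOf r a ∧ c₂ ∈ blocksOf r b := List.of_mem_zip (hget ▸ List.getElem_mem hi)
    refine some_mem_insertNone.2 (mem_product.2 ⟨?_, mem_image_of_mem _ ?_⟩)
    · simpa [L, blocksOf, hLa, hLb] using hi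
    · exact mem_product.2 ⟨mem_allVecs.2 (hblocks_a _ hc.1), mem_allVecs.2 (hblocks_b _ hc.2)⟩

theorem xi_mem_listPi {β d m : ℕ} (hβ : 0 < β) {v w : List Bool}
    (hv : v.length = m * β ^ (d + 1)) (hw : w.length = m * β ^ (d + 1)) :
    xi (β ^ ·) d v w ∈ listPi (List.replicate m (etaValues β (β ^ d))) := by
  have hr : 0 < β ^ (d + 1) := by positivity
  obtain ⟨hLv, hblocks_v⟩ := List.toChunks_of_length_eq_mul hr hv
  obtain ⟨hLw, hblocks_w⟩ := List.toChunks_of_length_eq_mul hr hw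
  have hlength : (xi (β ^ ·) d v w).length = m := by simp [xi, blocksOf, hLv, hLw]
  rw [mem_listPi, ← hlength]
  refine List.forall₂_replicate_right fun e he => ?_
  obtain ⟨⟨a, b⟩, hab, rfl⟩ := List.mem_map.1 he
  have hab := List.of_mem_zip hab
  exact eta_mem_etaValues (by positivity)
    (by rw [hblocks_v a hab.1, pow_succ, mul_comm]) (by rw [hblocks_w b hab.2, pow_succ, mul_comm])

theorem cColor_mem_listPi {β : ℕ} (hβ : 0 < β) (p : ℕ) {v w : List Bool}
    (hv : v.length = β ^ (p + 1)) (hw : w.length = β ^ (p + 1)) :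
    cColor (β ^ ·) p v w ∈ listPi ((List.range (p + 1)).map fun j =>
      listPi (List.replicate (β ^ j) (etaValues β (β ^ (p - j))))) := by
  rw [mem_listPi, cColor, List.forall₂_map_left_iff, List.forall₂_map_right_iff, List.forall₂_same]
  intro j hj
  have hsplit : β ^ (p + 1) = β ^ j * β ^ (p - j + 1) := by
    rw [← pow_add]
    congr 1
    have := List.mem_range.1 hj
    omega
  exact xi_mem_listPi hβ (hv.trans hsplit) (hw.trans hsplit)

theorem sum_range_succ_pow_le {β : ℕ} (hβ : 2 ≤ β) (p : ℕ) :
    ∑ j ∈ range (p + 1), β ^ j ≤ 2 * β ^ p := by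
  rw [sum_range_succ, two_mul]
  exact add_le_add_left (Nat.geomSum_lt hβ fun _ => mem_range.1).le _

theorem card_colorsOn_le {p β : ℕ} (hp : 1 ≤ p) (hβ : 2 ≤ β) :
    (colorsOn (β ^ ·) p (allVecs (β ^ (p + 1)))).card ≤ β ^ (4 * (p + 1) * β ^ p) := by
  have hβ0 : 0 < β := by omega
  have hsub : colorsOn (β ^ ·) p (allVecs (β ^ (p + 1))) ⊆ listPi ((List.range (p + 1)).map
      fun j => listPi (List.replicate (β ^ j) (etaValues β (β ^ (p - j))))) := by
    intro c hc
    obtain ⟨⟨v, w⟩, hvw, rfl⟩ := mem_image.1 hc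
    obtain ⟨hv, hw⟩ := mem_product.1 (mem_filter.1 hvw).1
    exact cColor_mem_listPi hβ0 p (mem_allVecs.1 hv) (mem_allVecs.1 hw)
  have hfactor : ∀ j ∈ List.range (p + 1),
      (listPi (List.replicate (β ^ j) (etaValues β (β ^ (p - j))))).card ≤
        β ^ (2 * β ^ p + 2 * β ^ j) := by
    intro j hj
    have hpj : β ^ (p - j) * β ^ j = β ^ p := by
      rw [← pow_add, Nat.sub_add_cancel (Nat.lt_succ_iff.1 (List.mem_range.1 hj))]
    calc _ ≤ (etaValues β (β ^ (p - j))).card ^ β ^ j := by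
          simpa using card_listPi_le (List.replicate (β ^ j) (etaValues β (β ^ (p - j))))
      _ ≤ (β ^ (2 * β ^ (p - j) + 2)) ^ β ^ j := Nat.pow_le_pow_left (card_etaValues_le hβ _) _
      _ = β ^ (2 * β ^ p + 2 * β ^ j) := by rw [← pow_mul, ← hpj]; ring_nf
  have hexponent : ∑ j ∈ range (p + 1), (2 * β ^ p + 2 * β ^ j) ≤ 4 * (p + 1) * β ^ p := by
    rw [sum_add_distrib, sum_const, card_range, smul_eq_mul, ← mul_sum]
    nlinarith [sum_range_succ_pow_le hβ p, Nat.mul_le_mul_right (β ^ p) hp]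
  calc _ ≤ _ := card_le_card hsub
    _ ≤ _ := card_listPi_le _
    _ ≤ ((List.range (p + 1)).map fun j => β ^ (2 * β ^ p + 2 * β ^ j)).prod := by
        rw [List.map_map]
        exact List.prod_le_prod' hfactor
    _ = β ^ ∑ j ∈ range (p + 1), (2 * β ^ p + 2 * β ^ j) := by
        rw [← prod_pow_eq_pow_sum, prod_eq_multiset_prod, range_val, ← Multiset.coe_range,
          Multiset.map_coe, Multiset.prod_coe]
    _ ≤ β ^ (4 * (p + 1) * β ^ p) := Nat.pow_le_pow_right hβ0 hexponent

theorem natCast_pow_eq_two_rpow {β : ℕ} (hβ : 0 < β) (N : ℕ) :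
    (β : ℝ) ^ N = (2 : ℝ) ^ (Real.logb 2 β * N) := by
  rw [Real.rpow_mul_natCast zero_le_two, Real.rpow_logb two_pos (by norm_num) (by positivity)]

/-- **Theorem 2.2.** For `p ≥ 1`, `β ≥ 2` and `r_i = β^i`, the coloring `c_p` of the
complete graph on `{0,1}^{β^{p+1}}` (which has `n = 2^{β^{p+1}}` vertices) uses at most
`2^{4(p+1)β^p log₂ β}` colors; equivalently, at most
`2^{4 (log₂ n)^{1 − 1/(p+1)} log₂ log₂ n}` colors. -/
theorem stmt1 (p β : ℕ) (hp : 1 ≤ p) (hβ : 2 ≤ β) :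
    (allVecs (β ^ (p + 1))).card = 2 ^ β ^ (p + 1) ∧
    ((colorsOn (fun i => β ^ i) p (allVecs (β ^ (p + 1)))).card : ℝ) ≤
      (2 : ℝ) ^ (4 * ((p : ℝ) + 1) * (β : ℝ) ^ p * Real.logb 2 β) ∧
    ∀ n : ℝ, n = (2 : ℝ) ^ (β ^ (p + 1) : ℕ) →
      ((colorsOn (fun i => β ^ i) p (allVecs (β ^ (p + 1)))).card : ℝ) ≤
        (2 : ℝ) ^ (4 * Real.logb 2 n ^ (1 - 1 / ((p : ℝ) + 1)) *
          Real.logb 2 (Real.logb 2 n)) := by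
  have hbound : ((colorsOn (fun i => β ^ i) p (allVecs (β ^ (p + 1)))).card : ℝ) ≤
      (2 : ℝ) ^ (4 * ((p : ℝ) + 1) * (β : ℝ) ^ p * Real.logb 2 β) := by
    calc _ ≤ (β : ℝ) ^ (4 * (p + 1) * β ^ p) := by exact_mod_cast card_colorsOn_le hp hβ
      _ = _ := by rw [natCast_pow_eq_two_rpow (by omega)]; push_cast; ring_nf
  refine ⟨card_allVecs _, hbound, fun n hn => ?_⟩
  have hlog : Real.logb 2 n = (β : ℝ) ^ (p + 1) := by
    rw [hn, Real.logb_pow, Real.logb_self_eq_one one_lt_two]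
    push_cast
    ring
  have hroot : Real.logb 2 n ^ (1 - 1 / ((p : ℝ) + 1)) = (β : ℝ) ^ p := by
    rw [hlog, ← Real.rpow_natCast, ← Real.rpow_mul (by positivity), ← Real.rpow_natCast]
    congr 1
    push_cast
    field_simp
    ring
  have hloglog : Real.logb 2 (Real.logb 2 n) = ((p : ℝ) + 1) * Real.logb 2 β := by
    rw [hlog, Real.logb_pow]
    push_cast
    ring
  rw [hroot, hloglog]
  convert hbound using 2
  ring
end

section
/- For all integers n ≥ 1, p and q with p ≥ 3 and 3 ≤ q ≤ (p−1)(p−2)/2 + 1, we have f(n·f(n, p−1, q−1), p, q) ≥ f(n, p−1, q−1). -/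
/-- `fEG n p q` is the Erdős–Gyárfás function `f(n, p, q)`: the minimum number of colors
in a `(p,q)`-coloring of the complete graph `K_n`, i.e. the least `k` for which there is
an edge-coloring of `K_n` with colors in `Fin k` such that among the edges spanned by
every set of `p` vertices at least `q` distinct colors appear. -/
noncomputable def fEG (n p q : ℕ) : ℕ :=
  sInf {k : ℕ | ∃ c : Sym2 (Fin n) → Fin k,
    ∀ S : Finset (Fin n), S.card = p →
      q ≤ (((S ×ˢ S).filter fun e => e.1 ≠ e.2).image fun e => c s(e.1, e.2)).card}

/-!
Let `m = f(n, p-1, q-1)` and suppose an optimal `(p,q)`-coloring `c` of `K_{nm}` (one exists,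
since `q ≤ C(p,2)` lets all edges get distinct colors) uses fewer than `m` colors.
By pigeonhole some vertex `v` sees one color `a` on its edges to `n` other vertices. Any `p-1`
of these together with `v` span at least `q` colors, of which only `a` can come from the
edges at `v`, so `c` restricted to these `n` vertices is a `(p-1,q-1)`-coloring of `K_n` with
fewer than `m` colors, a contradiction.
-/

open Finset

section EdgeColoring

variable {V W α : Type*} [DecidableEq V] [DecidableEq W] [DecidableEq α]

def spannedColors (c : Sym2 V → α) (S : Finset V) : Finset α :=
  ((S ×ˢ S).filter fun e => e.1 ≠ e.2).image fun e => c s(e.1, e.2)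

def IsPQColoring (p q : ℕ) (c : Sym2 V → α) : Prop :=
  ∀ S : Finset V, S.card = p → q ≤ (spannedColors c S).card

lemma spannedColors_eq_image_offDiag (c : Sym2 V → α) (S : Finset V) :
    spannedColors c S = (S.offDiag.image Sym2.mk.uncurry).image c := by
  rw [image_image, spannedColors]
  congr 1
  ext
  simp [and_assoc]

lemma card_spannedColors_of_injective {c : Sym2 V → α} (hc : Function.Injective c)
    (S : Finset V) : (spannedColors c S).card = S.card.choose 2 := by
  rw [spannedColors_eq_image_offDiag, card_image_of_injective _ hc, Sym2.card_image_offDiag]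

lemma isPQColoring_of_injective {p q : ℕ} {c : Sym2 V → α} (hc : Function.Injective c)
    (hq : q ≤ p.choose 2) : IsPQColoring p q c := by
  intro S hS
  rwa [card_spannedColors_of_injective hc, hS]

lemma spannedColors_insert_subset {c : Sym2 V → α} {S : Finset V} {v : V} {a : α}
    (ha : ∀ w ∈ S, c s(v, w) = a) :
    spannedColors c (insert v S) ⊆ insert a (spannedColors c S) := by
  simp only [spannedColors, subset_iff, mem_image, mem_filter, mem_product, mem_insert,
    Prod.exists]
  rintro _ ⟨x, y, ⟨⟨rfl | hx, rfl | hy⟩, hxy⟩, rfl⟩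
  · exact absurd rfl hxy
  · exact Or.inl (ha y hy)
  · exact Or.inl (Sym2.eq_swap ▸ ha x hx)
  · exact Or.inr ⟨x, y, ⟨⟨hx, hy⟩, hxy⟩, rfl⟩

lemma spannedColors_map (c : Sym2 W → α) (f : V ↪ W) (S : Finset V) :
    spannedColors c (S.map f) = spannedColors (c ∘ Sym2.map f) S := by
  ext x
  simp only [spannedColors, mem_image, mem_filter, mem_product, mem_map, Prod.exists]
  constructor
  · rintro ⟨_, _, ⟨⟨⟨x, hx, rfl⟩, ⟨y, hy, rfl⟩⟩, hxy⟩, rfl⟩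
    exact ⟨x, y, ⟨⟨hx, hy⟩, fun h => hxy (congrArg f h)⟩, rfl⟩
  · rintro ⟨x, y, ⟨⟨hx, hy⟩, hxy⟩, rfl⟩
    exact ⟨f x, f y, ⟨⟨⟨x, hx, rfl⟩, ⟨y, hy, rfl⟩⟩, f.injective.ne hxy⟩, rfl⟩

lemma IsPQColoring.comp_map_of_monochromatic_star {p q : ℕ} {c : Sym2 W → α}
    (hc : IsPQColoring (p + 1) q c) (f : V ↪ W) {v : W} {a : α} (hv : ∀ i, f i ≠ v)
    (ha : ∀ i, c s(v, f i) = a) : IsPQColoring p (q - 1) (c ∘ Sym2.map f) := by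
  intro S hS
  have hvS : v ∉ S.map f := by simpa using fun i _ => hv i
  have hq := hc (insert v (S.map f)) (by rw [card_insert_of_notMem hvS, card_map, hS])
  have hsub : spannedColors c (insert v (S.map f)) ⊆ insert a (spannedColors c (S.map f)) :=
    spannedColors_insert_subset (by simpa using fun i _ => ha i)
  have := (card_le_card hsub).trans (card_insert_le _ _)
  rw [spannedColors_map] at this
  omega

lemma exists_monochromatic_star [Fintype W] [Fintype α] {n : ℕ} (c : Sym2 W → α) (v : W)
    (hcard : Fintype.card α * n < Fintype.card W) :
    ∃ (f : Fin n ↪ W) (a : α), (∀ i, f i ≠ v) ∧ ∀ i, c s(v, f i) = a := by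
  obtain ⟨a, -, ha⟩ := exists_le_card_fiber_of_mul_le_card_of_maps_to (n := n)
    (s := univ.erase v) (t := univ) (f := fun w => c s(v, w)) (fun _ _ => mem_univ _)
    ⟨c s(v, v), mem_univ _⟩
    (by rw [card_univ, card_erase_of_mem (mem_univ v), card_univ]; omega)
  obtain ⟨f, hf⟩ := Function.Embedding.exists_of_card_le_finset (α := Fin n)
    (by simpa using ha)
  have hf' : ∀ i, f i ≠ v ∧ c s(v, f i) = a := fun i => by
    simpa using hf (Set.mem_range_self i)
  exact ⟨f, a, fun i => (hf' i).1, fun i => (hf' i).2⟩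

end EdgeColoring

lemma fEG_le_of_isPQColoring {n p q k : ℕ} {c : Sym2 (Fin n) → Fin k}
    (hc : IsPQColoring p q c) : fEG n p q ≤ k :=
  Nat.sInf_le ⟨c, hc⟩

lemma exists_isPQColoring_fEG {n p q k : ℕ} {c : Sym2 (Fin n) → Fin k}
    (hc : IsPQColoring p q c) : ∃ c : Sym2 (Fin n) → Fin (fEG n p q), IsPQColoring p q c :=
  Nat.sInf_mem (s := {k | ∃ c : Sym2 (Fin n) → Fin k, IsPQColoring p q c}) ⟨k, c, hc⟩

lemma sub_one_mul_sub_two_div_two_add_one_le_choose_two {p : ℕ} (hp : 2 ≤ p) :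
    (p - 1) * (p - 2) / 2 + 1 ≤ p.choose 2 := by
  obtain ⟨r, rfl⟩ : ∃ r, p = r + 1 := ⟨p - 1, by omega⟩
  rw [Nat.choose_succ_succ', Nat.choose_one_right, Nat.choose_two_right]
  simp only [Nat.add_one_sub_one, show r + 1 - 2 = r - 1 by omega]
  omega

theorem stmt13_general (n p q : ℕ) (hn : 1 ≤ n) (hp : 3 ≤ p)
    (hq' : q ≤ (p - 1) * (p - 2) / 2 + 1) :
    fEG n (p - 1) (q - 1) ≤ fEG (n * fEG n (p - 1) (q - 1)) p q := by
  set m := fEG n (p - 1) (q - 1)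
  obtain ⟨c, hc⟩ := exists_isPQColoring_fEG (c := Fintype.equivFin (Sym2 (Fin (n * m))))
    (isPQColoring_of_injective (Equiv.injective _)
      (hq'.trans (sub_one_mul_sub_two_div_two_add_one_le_choose_two (by omega))))
  by_contra! hlt
  have hcard : Fintype.card (Fin (fEG (n * m) p q)) * n < Fintype.card (Fin (n * m)) := by
    simp only [Fintype.card_fin]
    nlinarith
  obtain ⟨f, a, hv, ha⟩ := exists_monochromatic_star c (⟨0, by nlinarith⟩ : Fin (n * m)) hcard
  obtain ⟨r, rfl⟩ : ∃ r, p = r + 1 := ⟨p - 1, by omega⟩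
  exact hlt.not_ge (fEG_le_of_isPQColoring (hc.comp_map_of_monochromatic_star f hv ha))

/-- For all integers `n ≥ 1`, `p ≥ 3` and `3 ≤ q ≤ (p−1)(p−2)/2 + 1`, we have
`f(n·f(n, p−1, q−1), p, q) ≥ f(n, p−1, q−1)`. -/
theorem stmt13 (n p q : ℕ) (hn : 1 ≤ n) (hp : 3 ≤ p) (hq : 3 ≤ q)
    (hq' : q ≤ (p - 1) * (p - 2) / 2 + 1) :
    fEG n (p - 1) (q - 1) ≤ fEG (n * fEG n (p - 1) (q - 1)) p q :=
  stmt13_general n p q hn hp hq'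
end

section
/- For all integers p ≥ 3 and n ≥ p, every edge-coloring of the complete graph K_n on n vertices that uses fewer than n^{1/(p−2)} − 1 colors contains a set of p vertices whose edges receive at most p − 1 distinct colors. Consequently, f(n, p, p) ≥ n^{1/(p−2)} − 1. -/
lemma key {n : ℕ} (c : Sym2 (Fin n) → ℕ) (K : Finset ℕ)
    (hK : ∀ a b : Fin n, a ≠ b → c s(a, b) ∈ K) :
    ∀ m (S : Finset (Fin n)), (K.card + 1) ^ m + 1 ≤ S.card →
      ∃ T C : Finset _, T ⊆ S ∧ T.card = m + 2 ∧ C.card ≤ m + 1 ∧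
        ∀ a ∈ T, ∀ b ∈ T, a ≠ b → c s(a, b) ∈ (C : Finset ℕ) := by
  intro m
  induction m with
  | zero =>
    intro S hS
    simp only [pow_zero] at hS
    obtain ⟨a, ha, b, hb, hab⟩ :=
      Finset.one_lt_card.mp (show 1 < S.card by omega)
    refine ⟨{a, b}, {c s(a, b)}, ?_, ?_, ?_, ?_⟩
    · intro x hx; simp only [Finset.mem_insert, Finset.mem_singleton] at hx
      rcases hx with h | h <;> simp [h, ha, hb]
    · rw [Finset.card_insert_of_notMem (by simp [hab]), Finset.card_singleton]
    · simp
    · intro x hx y hy hxy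
      simp only [Finset.mem_insert, Finset.mem_singleton] at hx hy
      rcases hx with rfl | rfl <;> rcases hy with rfl | rfl <;>
        simp_all [Sym2.eq_swap]
  | succ m ih =>
    intro S hS
    have hpos : 0 < S.card := by
      have : 0 < (K.card + 1) ^ (m + 1) + 1 := by positivity
      omega
    obtain ⟨v, hv⟩ := Finset.card_pos.mp hpos
    set S' := S.erase v with hS'
    have hS'card : (K.card + 1) ^ (m + 1) ≤ S'.card := by
      rw [hS', Finset.card_erase_of_mem hv]; omega
    have hmaps : ∀ a ∈ S', c s(v, a) ∈ K := by
      intro a ha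
      exact hK v a (Finset.ne_of_mem_erase ha).symm
    have hlt : K.card * (K.card + 1) ^ m < S'.card := by
      calc K.card * (K.card + 1) ^ m < (K.card + 1) * (K.card + 1) ^ m := by
            have : 0 < (K.card + 1) ^ m := by positivity
            exact (Nat.mul_lt_mul_right this).mpr (Nat.lt_succ_self _)
        _ = (K.card + 1) ^ (m + 1) := by ring
        _ ≤ S'.card := hS'card
    obtain ⟨w, hw, hwcard⟩ :=
      Finset.exists_lt_card_fiber_of_mul_lt_card_of_maps_to hmaps hlt
    set F := S'.filter fun a => c s(v, a) = w with hF
    obtain ⟨T', C', hT'sub, hT'card, hC'card, hcol⟩ := ih F (by omega)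
    have hvF : v ∉ F := fun h => Finset.notMem_erase v S (Finset.mem_filter.mp h).1
    have hvT' : v ∉ T' := fun h => hvF (hT'sub h)
    refine ⟨insert v T', insert w C', ?_, ?_, ?_, ?_⟩
    · intro x hx
      rcases Finset.mem_insert.mp hx with rfl | h
      · exact hv
      · exact Finset.erase_subset v S (Finset.filter_subset _ _ (hT'sub h))
    · rw [Finset.card_insert_of_notMem hvT', hT'card]
    · calc (insert w C').card ≤ C'.card + 1 := Finset.card_insert_le _ _
        _ ≤ m + 2 := by omega
    · intro a ha b hb hab
      rcases Finset.mem_insert.mp ha with rfl | ha' <;>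
        rcases Finset.mem_insert.mp hb with rfl | hb'
      · exact absurd rfl hab
      · have := (Finset.mem_filter.mp (hT'sub hb')).2
        rw [this]; exact Finset.mem_insert_self _ _
      · have := (Finset.mem_filter.mp (hT'sub ha')).2
        rw [Sym2.eq_swap, this]
        exact Finset.mem_insert_self _ _
      · exact Finset.mem_insert_of_mem (hcol a ha' b hb' hab)

lemma pairs_card {n p : ℕ} (hp : 3 ≤ p) (S : Finset (Fin n)) (hS : S.card = p) :
    p ≤ (((S ×ˢ S).filter fun e => e.1 ≠ e.2).image fun e => s(e.1, e.2)).card := by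
  set P := ((S ×ˢ S).filter fun e => e.1 ≠ e.2).image fun e => s(e.1, e.2) with hP
  obtain ⟨a0, ha0⟩ := Finset.card_pos.mp (show 0 < S.card by omega)
  set S' := S.erase a0 with hS'
  have hS'card : S'.card = p - 1 := by rw [hS', Finset.card_erase_of_mem ha0, hS]
  obtain ⟨b1, hb1, b2, hb2, hb12⟩ :=
    Finset.one_lt_card.mp (show 1 < S'.card by omega)
  have hmemP : ∀ x ∈ S, ∀ y ∈ S, x ≠ y → s(x, y) ∈ P := by
    intro x hx y hy hxy
    exact Finset.mem_image.mpr ⟨(x, y),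
      Finset.mem_filter.mpr ⟨Finset.mem_product.mpr ⟨hx, hy⟩, hxy⟩, rfl⟩
  set Q : Finset (Sym2 (Fin n)) := insert s(b1, b2) (S'.image fun b => s(a0, b)) with hQ
  have hQsub : Q ⊆ P := by
    intro x hx
    rcases Finset.mem_insert.mp hx with rfl | hx'
    · exact hmemP b1 (Finset.mem_of_mem_erase hb1) b2 (Finset.mem_of_mem_erase hb2) hb12
    · obtain ⟨b, hb, rfl⟩ := Finset.mem_image.mp hx'
      exact hmemP a0 ha0 b (Finset.mem_of_mem_erase hb) (Finset.ne_of_mem_erase hb).symm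
  have hinj : Set.InjOn (fun b => s(a0, b)) S' := by
    intro x hx y hy hxy
    simp only [Sym2.eq, Sym2.rel_iff', Prod.mk.injEq, Prod.swap_prod_mk] at hxy
    rcases hxy with ⟨_, h⟩ | ⟨h1, h2⟩
    · exact h
    · exact h2.trans h1
  have himgcard : (S'.image fun b => s(a0, b)).card = p - 1 := by
    rw [Finset.card_image_of_injOn hinj, hS'card]
  have hnotmem : s(b1, b2) ∉ S'.image fun b => s(a0, b) := by
    intro h
    obtain ⟨b, hb, hbe⟩ := Finset.mem_image.mp h
    simp only [Sym2.eq, Sym2.rel_iff', Prod.mk.injEq, Prod.swap_prod_mk] at hbe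
    rcases hbe with ⟨h1, _⟩ | ⟨h2, _⟩
    · exact Finset.ne_of_mem_erase hb1 h1.symm
    · exact Finset.ne_of_mem_erase hb2 h2.symm
  have hQcard : Q.card = p := by
    rw [hQ, Finset.card_insert_of_notMem hnotmem, himgcard]; omega
  calc p = Q.card := hQcard.symm
    _ ≤ P.card := Finset.card_le_card hQsub


lemma part1 {n p : ℕ} (hp : 3 ≤ p) (hn : p ≤ n) (c : Sym2 (Fin n) → ℕ)
    (hlt : ((((Finset.univ : Finset (Sym2 (Fin n))).filter fun e => ¬ e.IsDiag).image c).card : ℝ) <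
      (n : ℝ) ^ (1 / ((p : ℝ) - 2)) - 1) :
    ∃ S : Finset (Fin n), S.card = p ∧
      (((S ×ˢ S).filter fun e => e.1 ≠ e.2).image fun e => c s(e.1, e.2)).card ≤ p - 1 := by
  set K := ((Finset.univ : Finset (Sym2 (Fin n))).filter fun e => ¬ e.IsDiag).image c with hKdef
  have hK : ∀ a b : Fin n, a ≠ b → c s(a, b) ∈ K := by
    intro a b hab
    exact Finset.mem_image_of_mem c (Finset.mem_filter.mpr ⟨Finset.mem_univ _, by
      simpa [Sym2.mk_isDiag_iff] using hab⟩)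
  -- real arithmetic: (K.card + 1)^(p-2) < n
  set q : ℝ := (p : ℝ) - 2 with hq
  have hq1 : (1 : ℝ) ≤ q := by
    have : (3 : ℝ) ≤ (p : ℝ) := by exact_mod_cast hp
    linarith
  have hqne : q ≠ 0 := by linarith
  have hcast : ((p - 2 : ℕ) : ℝ) = q := by
    rw [hq, Nat.cast_sub (by omega)]; norm_num
  have hx : ((n : ℝ) ^ (1 / q)) ^ (p - 2) = (n : ℝ) := by
    rw [← Real.rpow_natCast ((n : ℝ) ^ (1 / q)) (p - 2),
      ← Real.rpow_mul (Nat.cast_nonneg n), hcast, one_div_mul_cancel hqne, Real.rpow_one]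
  have hklt : (K.card : ℝ) + 1 < (n : ℝ) ^ (1 / q) := by linarith
  have hpow : ((K.card : ℝ) + 1) ^ (p - 2) < (n : ℝ) := by
    calc ((K.card : ℝ) + 1) ^ (p - 2) < ((n : ℝ) ^ (1 / q)) ^ (p - 2) :=
          pow_lt_pow_left₀ hklt (by positivity) (by omega)
      _ = (n : ℝ) := hx
  have hnat : (K.card + 1) ^ (p - 2) + 1 ≤ n := by
    have : ((K.card + 1) ^ (p - 2) : ℕ) < n := by exact_mod_cast (by push_cast; exact hpow :
      (((K.card + 1) ^ (p - 2) : ℕ) : ℝ) < (n : ℝ))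
    omega
  obtain ⟨T, C, _, hTcard, hCcard, hcol⟩ := key c K hK (p - 2) Finset.univ
    (by simpa [Finset.card_univ] using hnat)
  refine ⟨T, by omega, ?_⟩
  have hsub : (((T ×ˢ T).filter fun e => e.1 ≠ e.2).image fun e => c s(e.1, e.2)) ⊆ C := by
    intro x hx
    obtain ⟨e, he, rfl⟩ := Finset.mem_image.mp hx
    obtain ⟨hmem, hne⟩ := Finset.mem_filter.mp he
    obtain ⟨h1, h2⟩ := Finset.mem_product.mp hmem
    exact hcol e.1 h1 e.2 h2 hne
  calc (((T ×ˢ T).filter fun e => e.1 ≠ e.2).image fun e => c s(e.1, e.2)).card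
      ≤ C.card := Finset.card_le_card hsub
    _ ≤ p - 1 := by omega



/-- For integers `p ≥ 3` and `n ≥ p`: every edge-coloring of `K_n` using fewer than
`n^{1/(p−2)} − 1` colors contains a set of `p` vertices whose edges receive at most
`p − 1` distinct colors; consequently `f(n, p, p) ≥ n^{1/(p−2)} − 1`. -/
theorem stmt14 (p n : ℕ) (hp : 3 ≤ p) (hn : p ≤ n) :
    (∀ c : Sym2 (Fin n) → ℕ,
      ((((Finset.univ : Finset (Sym2 (Fin n))).filter fun e => ¬ e.IsDiag).image c).card : ℝ) <
          (n : ℝ) ^ (1 / ((p : ℝ) - 2)) - 1 →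
      ∃ S : Finset (Fin n), S.card = p ∧
        (((S ×ˢ S).filter fun e => e.1 ≠ e.2).image fun e => c s(e.1, e.2)).card ≤ p - 1) ∧
    (n : ℝ) ^ (1 / ((p : ℝ) - 2)) - 1 ≤ (fEG n p p : ℝ) := by
  refine ⟨fun c hlt => part1 hp hn c hlt, ?_⟩
  have hne : {k : ℕ | ∃ c : Sym2 (Fin n) → Fin k,
      ∀ S : Finset (Fin n), S.card = p →
        p ≤ (((S ×ˢ S).filter fun e => e.1 ≠ e.2).image fun e => c s(e.1, e.2)).card}.Nonempty := by
    refine ⟨Fintype.card (Sym2 (Fin n)), Fintype.equivFin (Sym2 (Fin n)), fun S hS => ?_⟩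
    have : (((S ×ˢ S).filter fun e => e.1 ≠ e.2).image
        fun e => (Fintype.equivFin (Sym2 (Fin n))) s(e.1, e.2)).card
        = (((S ×ˢ S).filter fun e => e.1 ≠ e.2).image fun e => s(e.1, e.2)).card := by
      rw [show (fun (e : Fin n × Fin n) => (Fintype.equivFin (Sym2 (Fin n))) s(e.1, e.2))
          = (Fintype.equivFin (Sym2 (Fin n))) ∘ (fun e => s(e.1, e.2)) from rfl,
        ← Finset.image_image,
        Finset.card_image_of_injective _ (Fintype.equivFin (Sym2 (Fin n))).injective]
    rw [this]
    exact pairs_card hp S hS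
  have hmem := Nat.sInf_mem hne
  obtain ⟨c, hc⟩ := hmem
  by_contra h
  push_neg at h
  set k := fEG n p p with hk
  set c' : Sym2 (Fin n) → ℕ := fun e => (c e : ℕ) with hc'
  have hKsub : (((Finset.univ : Finset (Sym2 (Fin n))).filter fun e => ¬ e.IsDiag).image c')
      ⊆ Finset.range k := by
    intro x hx
    obtain ⟨e, _, rfl⟩ := Finset.mem_image.mp hx
    exact Finset.mem_range.mpr (c e).isLt
  have hcard : ((((Finset.univ : Finset (Sym2 (Fin n))).filter
      fun e => ¬ e.IsDiag).image c').card : ℝ) < (n : ℝ) ^ (1 / ((p : ℝ) - 2)) - 1 := by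
    have h1 : (((Finset.univ : Finset (Sym2 (Fin n))).filter
        fun e => ¬ e.IsDiag).image c').card ≤ k := by
      simpa using Finset.card_le_card hKsub
    calc ((((Finset.univ : Finset (Sym2 (Fin n))).filter
          fun e => ¬ e.IsDiag).image c').card : ℝ) ≤ (k : ℝ) := by exact_mod_cast h1
      _ < _ := h
  obtain ⟨S, hScard, hSle⟩ := part1 hp hn c' hcard
  have hge := hc S hScard
  have heq : (((S ×ˢ S).filter fun e => e.1 ≠ e.2).image fun e => c' s(e.1, e.2)).card
      = (((S ×ˢ S).filter fun e => e.1 ≠ e.2).image fun e => c s(e.1, e.2)).card := by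
    rw [show (fun (e : Fin n × Fin n) => c' s(e.1, e.2))
        = Fin.val ∘ (fun e => c s(e.1, e.2)) from rfl, ← Finset.image_image,
      Finset.card_image_of_injective _ Fin.val_injective]
  omega
end

section
/- Let m ≥ 3 and t ≥ 3 be integers and embed {1,2,3}^3 into [m]^t by padding the last t−3 coordinates with 1. Under Mubayi's coloring c of the complete graph on [m]^t, the unordered pairs of distinct elements of the image of {1,2,3}^3 receive at most 3·2^3 = 24 distinct colors. In particular, since the image has 27 elements, c is not a (26, 25)-coloring of the complete graph on [m]^t. -/
/-- Mubayi's coloring of the complete graph on `[m]^t`: for distinct `v, w` the color is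
`({v_i, w_i}, a_1, …, a_t)`, where `i` is the least coordinate with `v i ≠ w i` and
`a_j` records whether `v j = w j` or not. (For `v = w` the first component is `none`.) -/
def mubayiColor {m t : ℕ} (v w : Fin t → Fin m) : Option (Sym2 (Fin m)) × (Fin t → Bool) :=
  (((List.finRange t).find? (fun i => v i != w i)).map (fun i => s(v i, w i)),
   fun j => v j != w j)

/-- For `m, t ≥ 3`, embed `{1,2,3}^3` into `[m]^t` by padding the last `t − 3`
coordinates with a fixed value. The image `T` has `27` elements, but the unordered
pairs of distinct elements of `T` receive at most `3·2³ = 24` distinct colors under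
Mubayi's coloring; in particular Mubayi's coloring is not a `(26, 25)`-coloring. -/
theorem stmt15 (m t : ℕ) (hm : 3 ≤ m) (ht : 3 ≤ t) :
    ∀ em : (Fin 3 → Fin 3) → (Fin t → Fin m),
      (∀ x (j : Fin t), em x j =
        if h : (j : ℕ) < 3 then Fin.castLE hm (x ⟨(j : ℕ), h⟩)
        else ⟨0, by omega⟩) →
      ∀ T : Finset (Fin t → Fin m), T = Finset.univ.image em →
        T.card = 27 ∧
        (((T ×ˢ T).filter fun e => e.1 ≠ e.2).image fun e => mubayiColor e.1 e.2).card ≤ 24 ∧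
        ¬ (∀ S : Finset (Fin t → Fin m), S.card = 26 →
            25 ≤ (((S ×ˢ S).filter fun e => e.1 ≠ e.2).image
              fun e => mubayiColor e.1 e.2).card) := by
  intro em hem T hT
  have hcast : Function.Injective (Fin.castLE hm) := Fin.castLE_injective hm
  -- injectivity of em
  have hinj : Function.Injective em := by
    intro x y hxy
    funext j
    have hj3 : (j : ℕ) < t := lt_of_lt_of_le j.2 ht
    have h1 := hem x ⟨(j : ℕ), hj3⟩
    have h2 := hem y ⟨(j : ℕ), hj3⟩
    rw [hxy] at h1
    rw [h1] at h2
    simp only [j.2, dif_pos] at h2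
    have := hcast h2
    simpa using this
  have hTcard : T.card = 27 := by
    rw [hT, Finset.card_image_of_injective _ hinj]
    simp [Fintype.card_fun]
  -- the explicit color set
  set pad : (Fin 3 → Bool) → (Fin t → Bool) := fun b j =>
    if h : (j : ℕ) < 3 then b ⟨(j : ℕ), h⟩ else false with hpad
  set F : Sym2 (Fin 3) × (Fin 3 → Bool) → Option (Sym2 (Fin m)) × (Fin t → Bool) :=
    fun p => (some (Sym2.map (Fin.castLE hm) p.1), pad p.2) with hF
  set E : Finset (Option (Sym2 (Fin m)) × (Fin t → Bool)) :=
    ((Finset.univ.filter fun s : Sym2 (Fin 3) => ¬ s.IsDiag) ×ˢ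
      (Finset.univ : Finset (Fin 3 → Bool))).image F with hE
  have hEcard : E.card ≤ 24 := by
    refine le_trans (Finset.card_image_le) ?_
    rw [Finset.card_product]
    have h1 : (Finset.univ.filter fun s : Sym2 (Fin 3) => ¬ s.IsDiag).card = 3 := by decide
    have h2 : (Finset.univ : Finset (Fin 3 → Bool)).card = 8 := by decide
    rw [h1, h2]
  -- every color on T lies in E
  have hsub : (((T ×ˢ T).filter fun e => e.1 ≠ e.2).image fun e => mubayiColor e.1 e.2) ⊆ E := by
    intro c hc
    simp only [Finset.mem_image, Finset.mem_filter, Finset.mem_product] at hc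
    obtain ⟨⟨v, w⟩, ⟨⟨hv, hw⟩, hvw⟩, hcol⟩ := hc
    rw [hT] at hv hw
    simp only [Finset.mem_image, Finset.mem_univ, true_and] at hv hw
    obtain ⟨x, hx⟩ := hv
    obtain ⟨y, hy⟩ := hw
    subst hx hy
    have hxy : x ≠ y := fun h => hvw (by rw [h])
    -- coordinates ≥ 3 agree
    have hhigh : ∀ j : Fin t, ¬ ((j : ℕ) < 3) → em x j = em y j := by
      intro j hj
      rw [hem x j, hem y j, dif_neg hj, dif_neg hj]
    have hlow : ∀ (j : Fin t) (h : (j : ℕ) < 3),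
        em x j = Fin.castLE hm (x ⟨(j : ℕ), h⟩) ∧
        em y j = Fin.castLE hm (y ⟨(j : ℕ), h⟩) := by
      intro j h
      constructor
      · rw [hem x j, dif_pos h]
      · rw [hem y j, dif_pos h]
    -- find? is some
    obtain ⟨i, hi⟩ := Function.ne_iff.mp hxy
    have hex : ∃ i₀, ((List.finRange t).find? (fun i => em x i != em y i)) = some i₀ := by
      rcases ho : ((List.finRange t).find? (fun i => em x i != em y i)) with _ | i₀
      · exfalso
        have := List.find?_eq_none.mp ho ⟨(i : ℕ), lt_of_lt_of_le i.2 ht⟩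
          (List.mem_finRange _)
        simp only [bne_iff_ne, ne_eq, not_not] at this
        have hlt : ((⟨(i : ℕ), lt_of_lt_of_le i.2 ht⟩ : Fin t) : ℕ) < 3 := i.2
        obtain ⟨hx', hy'⟩ := hlow _ hlt
        rw [hx', hy'] at this
        exact hi (by simpa using hcast this)
      · exact ⟨i₀, rfl⟩
    obtain ⟨i₀, hi₀⟩ := hex
    have hp : em x i₀ ≠ em y i₀ := by
      have := List.find?_some hi₀
      simpa using this
    have hi₀3 : (i₀ : ℕ) < 3 := by
      by_contra h
      exact hp (hhigh i₀ h)
    obtain ⟨hx0, hy0⟩ := hlow i₀ hi₀3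
    set i₀' : Fin 3 := ⟨(i₀ : ℕ), hi₀3⟩ with hi₀'
    have hne' : x i₀' ≠ y i₀' := by
      intro h
      apply hp
      rw [hx0, hy0, h]
    rw [hE]
    simp only [Finset.mem_image, Finset.mem_product, Finset.mem_filter, Finset.mem_univ,
      true_and, and_true]
    refine ⟨(s(x i₀', y i₀'), fun j : Fin 3 => x j != y j), by simpa using hne', ?_⟩
    rw [hF]
    simp only
    rw [← hcol]
    unfold mubayiColor
    rw [hi₀]
    refine Prod.ext ?_ ?_
    · simp only [Option.map_some, Sym2.map_pair_eq]
      rw [hx0, hy0]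
    · funext j
      simp only [hpad]
      by_cases h : (j : ℕ) < 3
      · rw [dif_pos h]
        obtain ⟨hx', hy'⟩ := hlow j h
        rw [hx', hy']
        rw [Bool.eq_iff_iff]
        simp only [bne_iff_ne, ne_eq]
        exact ⟨fun hne h' => hne (hcast h'), fun hne h' => hne (by rw [h'])⟩
      · rw [dif_neg h]
        rw [hhigh j h]
        simp
  have hTcol : (((T ×ˢ T).filter fun e => e.1 ≠ e.2).image fun e => mubayiColor e.1 e.2).card ≤ 24 :=
    le_trans (Finset.card_le_card hsub) hEcard
  refine ⟨hTcard, hTcol, ?_⟩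
  intro hall
  have hne : T.Nonempty := Finset.card_pos.mp (by omega)
  obtain ⟨a, ha⟩ := hne
  have hS : (T.erase a).card = 26 := by rw [Finset.card_erase_of_mem ha, hTcard]
  have h25 := hall (T.erase a) hS
  have hsub2 : (((T.erase a ×ˢ T.erase a).filter fun e => e.1 ≠ e.2).image
      fun e => mubayiColor e.1 e.2) ⊆
      (((T ×ˢ T).filter fun e => e.1 ≠ e.2).image fun e => mubayiColor e.1 e.2) := by
    apply Finset.image_subset_image
    apply Finset.filter_subset_filter
    exact Finset.product_subset_product (Finset.erase_subset _ _) (Finset.erase_subset _ _)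
  have := le_trans h25 (le_trans (Finset.card_le_card hsub2) hTcol)
  omega
end

section
/- Let s ≥ 1, m ≥ 2^s and t ≥ s be integers and embed S = {1,…,2^s}^s into [m]^t by padding the last t−s coordinates with 1. Under Mubayi's coloring c of the complete graph on [m]^t, the unordered pairs of distinct elements of the image of S (a set of 2^{s²} elements) receive at most (2^s choose 2)·2^s < 2^{3s} distinct colors. In particular, with p = 2^{s²}, the coloring c is not a (p, 2^{3s})-coloring of the complete graph on [m]^t. -/
open Finset

namespace Mubayi

variable {m t : ℕ}

def colors (T : Finset (Fin t → Fin m)) : Finset (Option (Sym2 (Fin m)) × (Fin t → Bool)) :=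
  ((T ×ˢ T).filter fun e => e.1 ≠ e.2).image fun e => mubayiColor e.1 e.2

lemma mubayiColor_of_ne {v w : Fin t → Fin m} (h : v ≠ w) :
    ∃ i, v i ≠ w i ∧ mubayiColor v w = (some s(v i, w i), fun j => v j != w j) := by
  have hex : ∃ i ∈ List.finRange t, (v i != w i) = true := by
    obtain ⟨i, hi⟩ := Function.ne_iff.mp h
    exact ⟨i, List.mem_finRange i, bne_iff_ne.mpr hi⟩
  obtain ⟨i, hi⟩ := Option.isSome_iff_exists.mp (List.find?_isSome.mpr hex)
  have hvi : (v i != w i) = true := List.find?_some (p := fun x => v x != w x) hi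
  exact ⟨i, bne_iff_ne.mp hvi, by simp [mubayiColor, hi]⟩

def supportedPatterns (J : Finset (Fin t)) : Finset (Fin t → Bool) :=
  Fintype.piFinset fun j => if j ∈ J then univ else {false}

lemma card_supportedPatterns (J : Finset (Fin t)) : #(supportedPatterns J) = 2 ^ #J := by
  rw [supportedPatterns, Fintype.card_piFinset]
  simp only [apply_ite Finset.card, prod_ite_mem, card_univ, Fintype.card_bool, card_singleton]
  simp

lemma card_colors_le (T : Finset (Fin t → Fin m)) (A : Finset (Fin m)) (J : Finset (Fin t))
    (hA : ∀ v ∈ T, ∀ j, v j ∈ A) (hJ : ∀ v ∈ T, ∀ w ∈ T, ∀ j ∉ J, v j = w j) :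
    #(colors T) ≤ (#A).choose 2 * 2 ^ #J := by
  have hsub : colors T ⊆ (A.offDiag.image Sym2.mk.uncurry ×ˢ supportedPatterns J).image
      fun p => (some p.1, p.2) := by
    intro c hc
    simp only [colors, mem_image, mem_filter, mem_product] at hc
    obtain ⟨⟨v, w⟩, ⟨⟨hv, hw⟩, hvw⟩, rfl⟩ := hc
    obtain ⟨i, hi, hc⟩ := mubayiColor_of_ne hvw
    refine mem_image.mpr ⟨(s(v i, w i), fun j => v j != w j), ?_, hc.symm⟩
    refine mem_product.mpr ⟨mem_image.mpr ⟨(v i, w i), ?_, rfl⟩, ?_⟩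
    · exact mem_offDiag.mpr ⟨hA v hv i, hA w hw i, hi⟩
    · simp only [supportedPatterns, Fintype.mem_piFinset]
      intro j
      split_ifs with hj
      · exact mem_univ _
      · simp [hJ v hv w hw j hj]
  calc #(colors T) ≤ #(A.offDiag.image Sym2.mk.uncurry ×ˢ supportedPatterns J) :=
        (card_le_card hsub).trans card_image_le
    _ = (#A).choose 2 * 2 ^ #J := by
        rw [card_product, Sym2.card_image_offDiag, card_supportedPatterns]

lemma choose_two_mul_lt_cube {n : ℕ} (hn : 0 < n) : n.choose 2 * n < n ^ 3 := by
  have : n.choose 2 < n ^ 2 := by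
    rw [Nat.choose_two_right, sq]
    calc n * (n - 1) / 2 ≤ n * (n - 1) := Nat.div_le_self _ _
      _ < n * n := Nat.mul_lt_mul_of_pos_left (by omega) hn
  calc n.choose 2 * n < n ^ 2 * n := Nat.mul_lt_mul_of_pos_right this hn
    _ = n ^ 3 := by ring

section Padding

variable {n s : ℕ}

def pad (hnm : n ≤ m) (a : Fin m) (x : Fin s → Fin n) : Fin t → Fin m :=
  fun j => if h : (j : ℕ) < s then Fin.castLE hnm (x ⟨j, h⟩) else a

variable (hnm : n ≤ m) (a : Fin m)

lemma pad_injective (ht : s ≤ t) :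
    Function.Injective (pad hnm a : (Fin s → Fin n) → Fin t → Fin m) := by
  intro x y hxy
  funext i
  have hi := congrFun hxy (Fin.castLE ht i)
  simpa [pad, Fin.ext_iff] using hi

lemma card_image_pad (ht : s ≤ t) :
    #(univ.image (pad hnm a : (Fin s → Fin n) → Fin t → Fin m)) = n ^ s := by
  rw [card_image_of_injective _ (pad_injective hnm a ht), card_univ, Fintype.card_fun,
    Fintype.card_fin, Fintype.card_fin]

lemma card_colors_image_pad_le (ht : s ≤ t) (ha : (a : ℕ) < n) :
    #(colors (univ.image (pad hnm a : (Fin s → Fin n) → Fin t → Fin m))) ≤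
      n.choose 2 * 2 ^ s := by
  refine (card_colors_le _ (univ.map (Fin.castLEEmb hnm)) (univ.map (Fin.castLEEmb ht))
    ?_ ?_).trans_eq (by simp)
  · simp only [forall_mem_image, mem_univ, forall_const, mem_map, true_and]
    intro x j
    by_cases hj : (j : ℕ) < s
    · exact ⟨x ⟨j, hj⟩, by simp [pad, hj]⟩
    · exact ⟨⟨a, ha⟩, by simp [pad, hj]⟩
  · simp only [forall_mem_image, mem_univ, forall_const, mem_map, true_and]
    intro x y j hj
    have hjs : ¬ (j : ℕ) < s := fun h => hj ⟨⟨j, h⟩, rfl⟩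
    simp [pad, hjs]

end Padding

end Mubayi

/-- For `s ≥ 1`, `m ≥ 2^s`, `t ≥ s`, embed `S = [2^s]^s` into `[m]^t` by padding the
last `t − s` coordinates with a fixed value. The image `T` has `2^{s²}` elements, but
its unordered pairs of distinct elements receive at most `C(2^s, 2)·2^s < 2^{3s}`
distinct colors under Mubayi's coloring; in particular, with `p = 2^{s²}`, Mubayi's
coloring is not a `(p, 2^{3s})`-coloring. -/
theorem stmt16 (s m t : ℕ) (hm : 2 ^ s ≤ m) (ht : s ≤ t) :
    ∀ em : (Fin s → Fin (2 ^ s)) → (Fin t → Fin m),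
      (∀ x (j : Fin t), em x j =
        if h : (j : ℕ) < s then Fin.castLE hm (x ⟨(j : ℕ), h⟩)
        else ⟨0, Nat.lt_of_lt_of_le (Nat.pow_pos (by norm_num)) hm⟩) →
      ∀ T : Finset (Fin t → Fin m), T = Finset.univ.image em →
        T.card = 2 ^ (s ^ 2) ∧
        (((T ×ˢ T).filter fun e => e.1 ≠ e.2).image fun e => mubayiColor e.1 e.2).card ≤
          Nat.choose (2 ^ s) 2 * 2 ^ s ∧
        Nat.choose (2 ^ s) 2 * 2 ^ s < 2 ^ (3 * s) ∧
        ¬ (∀ S : Finset (Fin t → Fin m), S.card = 2 ^ (s ^ 2) →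
            2 ^ (3 * s) ≤ (((S ×ˢ S).filter fun e => e.1 ≠ e.2).image
              fun e => mubayiColor e.1 e.2).card) := by
  intro em hem T hT
  have hpad : em = Mubayi.pad hm _ := funext fun x => funext (hem x)
  rw [hpad] at hT
  have hcard : #T = 2 ^ (s ^ 2) := by
    rw [hT, Mubayi.card_image_pad hm _ ht, ← pow_mul, sq]
  have hcolors : #(Mubayi.colors T) ≤ (2 ^ s).choose 2 * 2 ^ s :=
    hT ▸ Mubayi.card_colors_image_pad_le hm _ ht (Nat.pow_pos two_pos)
  have hlt : (2 ^ s).choose 2 * 2 ^ s < 2 ^ (3 * s) := by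
    simpa [← pow_mul, mul_comm] using
      Mubayi.choose_two_mul_lt_cube (Nat.pow_pos two_pos : 0 < 2 ^ s)
  exact ⟨hcard, hcolors, hlt, fun hall => (hall T hcard).not_gt (hcolors.trans_lt hlt)⟩
end

section
/- For every pair of integers p ≥ 1 and n ≥ 2^{(8p)^{p+1}}, there exists an integer β ≥ 2 such that n ≤ 2^{β^{p+1}} ≤ n². -/
/-!
Take `β` minimal with `n ≤ 2 ^ β ^ (p + 1)`. The hypothesis on `n` forces `β ≥ 8p`, and for
`β - 1 ≥ 2 (p + 1)` Bernoulli's inequality gives `β ^ (p + 1) ≤ 2 (β - 1) ^ (p + 1)`, so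
`2 ^ β ^ (p + 1) ≤ (2 ^ (β - 1) ^ (p + 1)) ^ 2 < n ^ 2` by minimality.
-/

theorem Nat.succ_pow_mul_sub_le_pow_succ (m k : ℕ) : (m + 1) ^ k * (m - k) ≤ m ^ (k + 1) := by
  induction k with
  | zero => simp
  | succ k ih =>
    have step : (m + 1) * (m - (k + 1)) ≤ m * (m - k) := by
      rcases le_or_gt m (k + 1) with h | h
      · simp [Nat.sub_eq_zero_of_le h]
      · zify [h.le, (by omega : k ≤ m)]
        nlinarith
    calc (m + 1) ^ (k + 1) * (m - (k + 1))
        = (m + 1) ^ k * ((m + 1) * (m - (k + 1))) := by ring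
      _ ≤ (m + 1) ^ k * (m * (m - k)) := Nat.mul_le_mul_left _ step
      _ = (m + 1) ^ k * (m - k) * m := by ring
      _ ≤ m ^ (k + 1) * m := Nat.mul_le_mul_right _ ih
      _ = m ^ (k + 1 + 1) := by ring

theorem Nat.succ_pow_le_two_mul_pow {m k : ℕ} (h : 2 * k ≤ m) : (m + 1) ^ k ≤ 2 * m ^ k := by
  rcases Nat.eq_zero_or_pos m with rfl | hm
  · obtain rfl : k = 0 := by omega
    simp
  refine Nat.le_of_mul_le_mul_right (c := m - k) ?_ (by omega)
  calc (m + 1) ^ k * (m - k) ≤ m ^ (k + 1) := Nat.succ_pow_mul_sub_le_pow_succ m k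
    _ = m ^ k * m := pow_succ m k
    _ ≤ m ^ k * (2 * (m - k)) := Nat.mul_le_mul_left _ (by omega)
    _ = 2 * m ^ k * (m - k) := by ring

theorem Nat.exists_le_pow_pow_le_sq {a k b n : ℕ} (ha : 1 < a) (hk : k ≠ 0) (hb : 2 * k < b)
    (hn : a ^ b ^ k ≤ n) : ∃ β, b ≤ β ∧ n ≤ a ^ β ^ k ∧ a ^ β ^ k ≤ n ^ 2 := by
  classical
  have hS : ∃ β, n ≤ a ^ β ^ k :=
    ⟨n, (Nat.lt_pow_self ha).le.trans (Nat.pow_le_pow_right (by omega) (Nat.le_self_pow hk n))⟩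
  have hβ : n ≤ a ^ Nat.find hS ^ k := Nat.find_spec hS
  have hbβ : b ≤ Nat.find hS := by
    by_contra! h
    have := Nat.pow_lt_pow_right ha (Nat.pow_lt_pow_left h hk)
    omega
  obtain ⟨m, hm⟩ : ∃ m, Nat.find hS = m + 1 := ⟨Nat.find hS - 1, by omega⟩
  have hmin : a ^ m ^ k < n := not_le.mp (Nat.find_min hS (by omega))
  refine ⟨Nat.find hS, hbβ, hβ, ?_⟩
  calc a ^ Nat.find hS ^ k = a ^ (m + 1) ^ k := by rw [hm]
    _ ≤ a ^ (2 * m ^ k) := Nat.pow_le_pow_right (by omega) (Nat.succ_pow_le_two_mul_pow (by omega))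
    _ = (a ^ m ^ k) ^ 2 := by rw [mul_comm, pow_mul]
    _ ≤ n ^ 2 := Nat.pow_le_pow_left hmin.le 2

/-- For every pair of integers `p ≥ 1` and `n ≥ 2^{(8p)^{p+1}}` there exists an integer
`β ≥ 2` such that `n ≤ 2^{β^{p+1}} ≤ n²`. -/
theorem stmt17 (p n : ℕ) (hp : 1 ≤ p) (hn : 2 ^ (8 * p) ^ (p + 1) ≤ n) :
    ∃ β : ℕ, 2 ≤ β ∧ n ≤ 2 ^ β ^ (p + 1) ∧ 2 ^ β ^ (p + 1) ≤ n ^ 2 := by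
  obtain ⟨β, hβ, hle, hsq⟩ :=
    Nat.exists_le_pow_pow_le_sq one_lt_two p.succ_ne_zero (by omega : 2 * (p + 1) < 8 * p) hn
  exact ⟨β, by omega, hle, hsq⟩
end
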